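/- arXiv:2203.00334 — 5 statements merged into one kernel-verified Lean document; each statement's English description precedes it below -/
import Mathlib

section
/- Let G be an Abelian group, H a subgroup of G, and S a subgroup of Ĝ. Then H is dense in G_S if and only if for every φ ∈ S, the image φ[H] is dense in φ[G] as subsets of the circle group 𝕋 = ℝ/ℤ. -/
/-- The coarsest topology on `G` making every character in `S` continuous. -/
noncomputable def tauS {G : Type*} [AddCommGroup G]
    (S : AddSubgroup (G →+ AddCircle (1 : ℝ))) : TopologicalSpace G :=
  ⨅ φ ∈ S, TopologicalSpace.induced ⇑φ inferInstance

/-- The topology of pointwise convergence on the dual group `Ĝ`. -/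
noncomputable def dualTop (G : Type*) [AddCommGroup G] :
    TopologicalSpace (G →+ AddCircle (1 : ℝ)) :=
  TopologicalSpace.induced (fun φ => (φ : G → AddCircle (1 : ℝ))) Pi.topologicalSpace

/-- A group topology on `G` is totally bounded if it is Hausdorff, makes `G` a
topological group, and every neighborhood `U` of `0` satisfies `G = F + U` for
some finite `F`. -/
def IsTotallyBoundedGroupTopology {G : Type*} [AddCommGroup G]
    (t : TopologicalSpace G) : Prop :=
  @IsTopologicalAddGroup G t _ ∧ @T2Space G t ∧
    ∀ U ∈ @nhds G t 0, ∃ F : Set G, F.Finite ∧ ∀ g : G, ∃ f ∈ F, ∃ u ∈ U, g = f + u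

/-!
The forward direction is continuity of each `φ ∈ S` for `τ_S`. Conversely, a basic
`τ_S`-neighbourhood of `g` is cut out by finitely many `φ₁, …, φₙ ∈ S`, so it suffices that
`Φ g ∈ closure (Φ H)` for `Φ = (φ₁, …, φₙ) : G → 𝕋ⁿ`. If not, duality for the torus gives
`m ∈ ℤⁿ` with `∑ mᵢ xᵢ` vanishing on `closure (Φ H)` but not at `Φ g`; then `ψ = ∑ mᵢ φᵢ ∈ S`
maps `H` to `0` and `g` outside `closure (ψ H)`, contradicting the hypothesis.

Torus duality is obtained by lifting to `ℝⁿ`: the preimage `L` of a closed subgroup of `𝕋ⁿ` is a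
closed subgroup of `ℝⁿ` containing `ℤⁿ`, and a point outside a closed subgroup `L` of a
finite-dimensional real space is separated from it by a linear form taking integer values on `L`.
That is proved by induction on the dimension: a non-discrete `L` contains a line, which we
quotient out, and a discrete `L` is a lattice in its span.
-/

open Module Submodule Topology Filter

section IntValued

variable {E : Type*} [NormedAddCommGroup E] [NormedSpace ℝ E]

lemma norm_floor_div_norm_zsmul_sub_le (u : E) (t : ℝ) :
    ‖⌊t / ‖u‖⌋ • u - t • (‖u‖⁻¹ • u)‖ ≤ ‖u‖ := by
  have : ⌊t / ‖u‖⌋ • u - t • (‖u‖⁻¹ • u) = (-Int.fract (t / ‖u‖)) • u := by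
    rw [smul_smul, ← Int.cast_smul_eq_zsmul ℝ, ← sub_smul, Int.fract, div_eq_mul_inv]
    congr 1
    ring
  rw [this, norm_smul, norm_neg, Real.norm_of_nonneg (Int.fract_nonneg _)]
  exact mul_le_of_le_one_left (norm_nonneg u) (Int.fract_lt_one _).le

lemma exists_forall_smul_mem_of_not_discreteTopology [FiniteDimensional ℝ E]
    {L : Submodule ℤ E} (hL : IsClosed (L : Set E)) (hdisc : ¬ DiscreteTopology L) :
    ∃ v : E, v ≠ 0 ∧ ∀ t : ℝ, t • v ∈ L := by
  have hsmall : ∀ ε > 0, ∃ x ∈ L, x ≠ 0 ∧ ‖x‖ < ε := by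
    by_contra! h
    obtain ⟨ε, hε, hε'⟩ := h
    refine hdisc (DiscreteTopology.of_forall_le_dist hε fun x y hxy => ?_)
    show ε ≤ dist x y
    rw [dist_eq_norm]
    exact hε' _ (x - y).2 (by simpa [sub_eq_zero] using hxy)
  choose u huL hu0 hu using fun k : ℕ => hsmall (1 / (k + 1)) Nat.one_div_pos_of_nat
  have hu_lim : Tendsto (fun k => ‖u k‖) atTop (𝓝 0) :=
    squeeze_zero (fun _ => norm_nonneg _) (fun k => (hu k).le)
      tendsto_one_div_add_atTop_nhds_zero_nat
  have hdir : ∀ k, ‖u k‖⁻¹ • u k ∈ Metric.sphere (0 : E) 1 := fun k => by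
    simp [norm_smul, inv_mul_cancel₀ (norm_ne_zero_iff.mpr (hu0 k))]
  obtain ⟨v, hv, φ, hφ, hv_lim⟩ := (isCompact_sphere (0 : E) 1).tendsto_subseq hdir
  refine ⟨v, ne_zero_of_mem_unit_sphere ⟨v, hv⟩, fun t => ?_⟩
  have herr : Tendsto (fun j => ⌊t / ‖u (φ j)‖⌋ • u (φ j) - t • (‖u (φ j)‖⁻¹ • u (φ j)))
      atTop (𝓝 0) :=
    squeeze_zero_norm (fun j => norm_floor_div_norm_zsmul_sub_le _ t)
      (hu_lim.comp hφ.tendsto_atTop)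
  have hlim := herr.add (hv_lim.const_smul t)
  simp only [zero_add, Function.comp_apply, sub_add_cancel] at hlim
  exact hL.mem_of_tendsto hlim (Eventually.of_forall fun j => L.smul_mem _ (huL _))

lemma exists_intValued_of_isZLattice [FiniteDimensional ℝ E] {M : Submodule ℤ E}
    [DiscreteTopology M] [IsZLattice ℝ M] {q : E} (hq : q ∉ M) :
    ∃ f : E →ₗ[ℝ] ℝ, (∀ x ∈ M, ∃ k : ℤ, f x = k) ∧ ∀ k : ℤ, f q ≠ k := by
  have : Module.Free ℤ M := ZLattice.module_free ℝ M
  let B := (Free.chooseBasis ℤ M).ofZLatticeBasis ℝ M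
  have hmem (x : E) : x ∈ M ↔ ∀ i, B.repr x i ∈ Set.range ((↑) : ℤ → ℝ) := by
    conv_lhs => rw [← (Free.chooseBasis ℤ M).ofZLatticeBasis_span ℝ]
    exact B.mem_span_iff_repr_mem ℤ x
  obtain ⟨i, hi⟩ := not_forall.mp ((hmem q).not.mp hq)
  refine ⟨B.coord i, fun x hx => ?_, fun k hk => hi ⟨k, hk.symm⟩⟩
  obtain ⟨k, hk⟩ := (hmem x).mp hx i
  exact ⟨k, hk.symm⟩

lemma intCast_ne_inv_two (k : ℤ) : (k : ℝ) ≠ 2⁻¹ := by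
  intro hk
  have : ((2 * k : ℤ) : ℝ) = 1 := by rw [Int.cast_mul, hk]; norm_num
  have : 2 * k = 1 := by exact_mod_cast this
  omega

lemma exists_intValued_of_discreteTopology [FiniteDimensional ℝ E] {L : Submodule ℤ E}
    [DiscreteTopology L] {q : E} (hq : q ∉ L) :
    ∃ f : E →ₗ[ℝ] ℝ, (∀ x ∈ L, ∃ k : ℤ, f x = k) ∧ ∀ k : ℤ, f q ≠ k := by
  set W := span ℝ (L : Set E)
  by_cases hqW : q ∈ W
  · let L₀ : Submodule ℤ W := L.comap (W.subtype.restrictScalars ℤ)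
    have hL₀ : W.subtype '' L₀ = L := by
      ext x
      exact ⟨by rintro ⟨y, hy, rfl⟩; exact hy, fun hx => ⟨⟨x, subset_span hx⟩, hx, rfl⟩⟩
    have : DiscreteTopology L₀ :=
      DiscreteTopology.preimage_of_continuous_injective (L : Set E)
        (LinearMap.continuous_of_finiteDimensional W.subtype) W.injective_subtype
    have : IsZLattice ℝ L₀ := ⟨by
      rw [← (map_injective_of_injective W.injective_subtype).eq_iff, map_span, Submodule.map_top,
        range_subtype, hL₀]⟩
    obtain ⟨g, hgL, hgq⟩ := exists_intValued_of_isZLattice (M := L₀) (q := ⟨q, hqW⟩) hq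
    obtain ⟨f, rfl⟩ := LinearMap.exists_extend g
    exact ⟨f, fun x hx => hgL ⟨x, subset_span hx⟩ hx, hgq⟩
  · obtain ⟨f, hfq, hfW⟩ := exists_dual_map_eq_bot_of_notMem hqW inferInstance
    refine ⟨(2 * f q)⁻¹ • f, fun x hx => ⟨0, ?_⟩, fun k hk => intCast_ne_inv_two k ?_⟩
    · have : f x ∈ W.map f := mem_map_of_mem (subset_span hx)
      simp_all
    · rw [← hk, LinearMap.smul_apply, smul_eq_mul, mul_inv, mul_assoc, inv_mul_cancel₀ hfq,
        mul_one]

theorem exists_intValued_of_isClosed [FiniteDimensional ℝ E] {L : Submodule ℤ E}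
    (hL : IsClosed (L : Set E)) {q : E} (hq : q ∉ L) :
    ∃ f : E →ₗ[ℝ] ℝ, (∀ x ∈ L, ∃ k : ℤ, f x = k) ∧ ∀ k : ℤ, f q ≠ k := by
  induction hn : finrank ℝ E using Nat.strong_induction_on generalizing E with
  | _ n ih =>
  by_cases hdisc : DiscreteTopology L
  · exact exists_intValued_of_discreteTopology hq
  obtain ⟨v, hv, hvL⟩ := exists_forall_smul_mem_of_not_discreteTopology hL hdisc
  set V := ℝ ∙ v
  have : IsClosed (V : Set E) := V.closed_of_finiteDimensional
  let π : E →ₗ[ℤ] E ⧸ V := V.mkQ.restrictScalars ℤ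
  have hcomap : (L.map π).comap π = L := by
    rw [comap_map_eq, sup_eq_left, LinearMap.ker_restrictScalars, ker_mkQ]
    intro x hx
    obtain ⟨t, rfl⟩ := mem_span_singleton.mp hx
    exact hvL t
  have hclosed : IsClosed (L.map π : Set (E ⧸ V)) := by
    rw [← V.isOpenQuotientMap_mkQ.isQuotientMap.isClosed_preimage]
    change IsClosed ((L.map π).comap π : Set E)
    rwa [hcomap]
  have hrank : finrank ℝ (E ⧸ V) < n := by
    have := V.finrank_quotient_add_finrank
    rw [finrank_span_singleton hv] at this
    omega
  have hq' : π q ∉ L.map π := by rwa [← Submodule.mem_comap, hcomap]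
  obtain ⟨g, hgL, hgq⟩ := ih _ hrank hclosed hq' rfl
  exact ⟨g ∘ₗ V.mkQ, fun x hx => hgL _ (mem_map_of_mem hx), hgq⟩

end IntValued

theorem exists_sum_zsmul_ne_zero_of_notMem_closure {ι : Type*} [Fintype ι]
    {K : AddSubgroup (ι → AddCircle (1 : ℝ))} {p : ι → AddCircle (1 : ℝ)}
    (hp : p ∉ closure (K : Set (ι → AddCircle (1 : ℝ)))) :
    ∃ m : ι → ℤ, (∀ k ∈ K, ∑ i, m i • k i = 0) ∧ ∑ i, m i • p i ≠ 0 := by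
  classical
  let π : (ι → ℝ) →+ (ι → AddCircle (1 : ℝ)) := (QuotientAddGroup.mk' _).compLeft ι
  have hπ : Continuous π := continuous_pi fun i => continuous_quot_mk.comp (continuous_apply i)
  have hπ_surj : Function.Surjective π := fun k =>
    ⟨fun i => (QuotientAddGroup.mk_surjective (k i)).choose,
      funext fun i => (QuotientAddGroup.mk_surjective (k i)).choose_spec⟩
  let L : Submodule ℤ (ι → ℝ) := (K.topologicalClosure.comap π).toIntSubmodule
  obtain ⟨q, rfl⟩ := hπ_surj p
  obtain ⟨f, hfL, hfq⟩ := exists_intValued_of_isClosed (L := L) (isClosed_closure.preimage hπ) hp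
  have hbasis (i : ι) : (fun j => if i = j then (1 : ℝ) else 0) ∈ L := by
    have : π (fun j => if i = j then (1 : ℝ) else 0) = 0 := by
      funext j; by_cases h : i = j <;> simp [π, h]
    exact (this ▸ subset_closure K.zero_mem : _)
  choose m hm using fun i => hfL _ (hbasis i)
  have key (x : ι → ℝ) : ∑ i, m i • π x i = (f x : AddCircle (1 : ℝ)) := by
    change _ = QuotientAddGroup.mk' _ (f x)
    rw [LinearMap.pi_apply_eq_sum_univ f x, map_sum]
    refine Finset.sum_congr rfl fun i _ => ?_
    rw [hm, smul_eq_mul, mul_comm, ← zsmul_eq_mul, map_zsmul]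
    rfl
  refine ⟨m, fun k hk => ?_, ?_⟩
  · obtain ⟨x, rfl⟩ := hπ_surj k
    obtain ⟨n, hn⟩ := hfL x (subset_closure hk)
    rw [key, hn, AddCircle.coe_eq_zero_iff]
    exact ⟨n, by simp⟩
  · rw [key, Ne, AddCircle.coe_eq_zero_iff]
    rintro ⟨n, hn⟩
    exact hfq n (by simpa using hn.symm)

section tauS

variable {G : Type*} [AddCommGroup G] {S : AddSubgroup (G →+ AddCircle (1 : ℝ))}

lemma continuous_tauS_of_mem {φ : G →+ AddCircle (1 : ℝ)} (hφ : φ ∈ S) :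
    Continuous[tauS S, _] φ :=
  continuous_iff_le_induced.mpr (iInf₂_le φ hφ)

lemma mem_closure_tauS_of_forall_finite {A : Set G} {g : G}
    (h : ∀ I : Set S, I.Finite →
      (fun i : I => (i : S).1 g) ∈ closure ((fun a (i : I) => (i : S).1 a) '' A)) :
    g ∈ @closure G (tauS S) A := by
  let _ : TopologicalSpace G := tauS S
  have hnhds : @nhds G (tauS S) g = ⨅ φ : S, comap φ.1 (𝓝 (φ.1 g)) := by
    rw [tauS, iInf_subtype', nhds_iInf]
    exact iInf_congr fun φ => nhds_induced _ _
  rw [mem_closure_iff_nhds_basis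
    (hnhds ▸ HasBasis.iInf' fun φ : S => (nhds_basis_opens _).comap _)]
  rintro ⟨I, O⟩ ⟨hI, hO⟩
  have : Finite I := hI.to_subtype
  obtain ⟨_, hbox, a, ha, rfl⟩ := mem_closure_iff.mp (h I hI) (Set.univ.pi fun i : I => O i)
    (isOpen_set_pi Set.finite_univ fun i _ => (hO i i.2).2) fun i _ => (hO i i.2).1
  exact ⟨a, ha, Set.mem_iInter₂.mpr fun i hi => hbox ⟨i, hi⟩ trivial⟩

end tauS

theorem stmt5 {G : Type*} [AddCommGroup G] (H : AddSubgroup G)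
    (S : AddSubgroup (G →+ AddCircle (1 : ℝ))) :
    @Dense G (tauS S) (H : Set G) ↔
      ∀ φ ∈ S, Set.range ⇑φ ⊆ closure (⇑φ '' (H : Set G)) := by
  let _ : TopologicalSpace G := tauS S
  refine ⟨fun hH φ hφ => ?_, fun hS g => mem_closure_tauS_of_forall_finite fun I hI => ?_⟩
  · rintro _ ⟨g, rfl⟩
    exact image_closure_subset_closure_image (continuous_tauS_of_mem hφ) ⟨g, hH g, rfl⟩
  have : Fintype I := hI.fintype
  let Φ : G →+ (I → AddCircle (1 : ℝ)) := AddMonoidHom.pi fun i => (i : S).1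
  by_contra hg
  obtain ⟨m, hmH, hmg⟩ := exists_sum_zsmul_ne_zero_of_notMem_closure (K := H.map Φ) (p := Φ g)
    (by rwa [AddSubgroup.coe_map])
  let ψ := ∑ i : I, m i • (i : S).1
  have hψ (a : G) : ψ a = ∑ i, m i • Φ a i := by simp [ψ, Φ]
  have hψH : ψ '' H ⊆ {0} := by
    rintro _ ⟨a, ha, rfl⟩
    exact (hψ a).trans (hmH _ ⟨a, ha, rfl⟩)
  have hψS : ψ ∈ S := AddSubgroup.sum_mem _ fun i _ => AddSubgroup.zsmul_mem _ (i : S).2 _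
  exact hmg ((hψ g).symm.trans (closure_minimal hψH isClosed_singleton (hS ψ hψS ⟨g, rfl⟩)))
end

section
/- Let G be an Abelian group, H a subgroup of G, and S a subgroup of Ĝ. Then H is closed in G_S if and only if A(Ĝ, H) equals the closure of A(S, H) in Ĝ (equivalently, the closure in Ĝ of S ∩ A(Ĝ, H)), where Ĝ carries the topology of pointwise convergence. -/
/-!
Both closures are computed by duality with tori. The map `g ↦ (φ g)_{φ ∈ S}` makes `τ_S` the
topology induced from the compact group `𝕋^S`, and `Ĝ` carries the topology induced from `𝕋^G`.
In a torus `𝕋^I`, the closure of a subgroup `A` consists of the points killed by every integer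
character `f ↦ ∑ nᵢ fᵢ` that kills `A`: if `x ∉ closure A`, averaging over the Haar measure of
`closure A` and over its translate by `x` gives the same value on every character, hence (by
Stone–Weierstrass) on every continuous function, which fails for an Urysohn function separating
`x` from `closure A`.

Hence the `τ_S`-closure of `H` is the common kernel `N` of `S ∩ A(Ĝ, H)`, and the closure of
`S ∩ A(Ĝ, H)` in `Ĝ` is `A(Ĝ, N)`. Since `𝕋` is divisible, characters separate points from
subgroups, so `A(Ĝ, N) = A(Ĝ, H)` exactly when `N = H`.
-/

open Set MeasureTheory Pointwise

local notation "𝕋" => AddCircle (1 : ℝ)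

section Pairing

variable {I A : Type*} [AddCommGroup A]

noncomputable def finsuppPairing : (I →₀ ℤ) →+ (I → A) →+ A :=
  Finsupp.liftAddHom fun i => zmultiplesHom _ (Pi.evalAddMonoidHom (fun _ => A) i)

lemma finsuppPairing_apply (n : I →₀ ℤ) (f : I → A) :
    finsuppPairing n f = n.sum fun i z => z • f i := by
  simp [finsuppPairing, Finsupp.liftAddHom_apply, AddMonoidHom.finsuppSum_apply]

lemma finsuppPairing_single_one (i : I) (f : I → A) :
    finsuppPairing (Finsupp.single i 1) f = f i := by
  simp [finsuppPairing]

lemma finsuppPairing_comp {B : Type*} [AddCommGroup B] (n : I →₀ ℤ) (χ : A →+ B) (v : I → A) :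
    finsuppPairing n (χ ∘ v) = χ (finsuppPairing n v) := by
  simp [finsuppPairing_apply, map_finsuppSum]

lemma continuous_finsuppPairing [TopologicalSpace A] [IsTopologicalAddGroup A] (n : I →₀ ℤ) :
    Continuous (finsuppPairing n : (I → A) → A) := by
  simp only [funext (finsuppPairing_apply n), Finsupp.sum]
  fun_prop

end Pairing

section TrigPolynomials

variable {I : Type*}

noncomputable def expChar (n : I →₀ ℤ) : C(I → 𝕋, ℂ) :=
  ⟨fun f => (finsuppPairing n f).toCircle,
    continuous_subtype_val.comp
      (AddCircle.continuous_toCircle.comp (continuous_finsuppPairing n))⟩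

lemma expChar_apply (n : I →₀ ℤ) (f : I → 𝕋) :
    expChar n f = ((finsuppPairing n f).toCircle : ℂ) := rfl

lemma expChar_apply_add (n : I →₀ ℤ) (f g : I → 𝕋) :
    expChar n (f + g) = expChar n f * expChar n g := by
  simp [expChar_apply, AddCircle.toCircle_add]

lemma expChar_add (n m : I →₀ ℤ) : expChar (n + m) = expChar n * expChar m := by
  ext f
  simp [expChar_apply, AddCircle.toCircle_add]

lemma expChar_zero : expChar (0 : I →₀ ℤ) = 1 := by
  ext f
  simp [expChar_apply]

lemma star_expChar (n : I →₀ ℤ) : star (expChar n) = expChar (-n) := by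
  ext f
  simp only [ContinuousMap.star_apply, expChar_apply, map_neg, AddMonoidHom.neg_apply,
    AddCircle.toCircle_neg, Circle.coe_inv_eq_conj]
  rfl

lemma expChar_apply_eq_one_iff (n : I →₀ ℤ) (f : I → 𝕋) :
    expChar n f = 1 ↔ finsuppPairing n f = 0 := by
  rw [expChar_apply, Circle.coe_eq_one, ← AddCircle.toCircle_zero (T := 1),
    (AddCircle.injective_toCircle one_ne_zero).eq_iff]

variable (I) in
noncomputable def trigPolynomials : StarSubalgebra ℂ C(I → 𝕋, ℂ) :=
  { (Submodule.span ℂ (range expChar)).toSubalgebra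
      (Submodule.subset_span ⟨0, expChar_zero⟩)
      (fun a b ha hb => by
        have hmul : range (expChar (I := I)) * range expChar ⊆ range expChar := by
          rintro _ ⟨_, ⟨n, rfl⟩, _, ⟨m, rfl⟩, rfl⟩
          exact ⟨n + m, expChar_add n m⟩
        exact Submodule.span_mono hmul
          (Submodule.span_mul_span ℂ (range expChar) (range expChar) ▸
            Submodule.mul_mem_mul ha hb)) with
    star_mem' := fun {a} ha => by
      induction ha using Submodule.span_induction with
      | mem x hx =>
        obtain ⟨n, rfl⟩ := hx
        exact Submodule.subset_span ⟨-n, (star_expChar n).symm⟩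
      | zero => simp
      | add x y _ _ hx hy => simpa using add_mem hx hy
      | smul c x _ hx => simpa using Submodule.smul_mem _ (star c) hx }

lemma expChar_mem_trigPolynomials (n : I →₀ ℤ) : expChar n ∈ trigPolynomials I :=
  Submodule.subset_span ⟨n, rfl⟩

lemma trigPolynomials_separatesPoints : (trigPolynomials I).SeparatesPoints := by
  intro f g hfg
  obtain ⟨i, hi⟩ := Function.ne_iff.mp hfg
  refine ⟨_, ⟨expChar (Finsupp.single i 1), expChar_mem_trigPolynomials _, rfl⟩, ?_⟩
  simpa [expChar_apply, finsuppPairing_single_one, Circle.coe_inj,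
    (AddCircle.injective_toCircle one_ne_zero).eq_iff] using hi

lemma dense_span_expChar :
    Dense (Submodule.span ℂ (range (expChar (I := I))) : Set C(I → 𝕋, ℂ)) := by
  have h := ContinuousMap.starSubalgebra_topologicalClosure_eq_top_of_separatesPoints _
    (trigPolynomials_separatesPoints (I := I))
  rw [dense_iff_closure_eq]
  exact congrArg SetLike.coe h

end TrigPolynomials

section Averaging

variable {X Y : Type*} [TopologicalSpace X] [CompactSpace X]
  [TopologicalSpace Y] [MeasurableSpace Y] [OpensMeasurableSpace Y]

lemma integrable_continuousMap_comp (μ : Measure Y) [IsFiniteMeasure μ] (T : C(Y, X))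
    (f : C(X, ℂ)) : Integrable (fun y => f (T y)) μ :=
  .of_bound (f.comp T).continuous.aestronglyMeasurable ‖f‖
    (ae_of_all _ fun y => f.norm_coe_le_norm (T y))

noncomputable def integralCompCLM (μ : Measure Y) [IsFiniteMeasure μ] (T : C(Y, X)) :
    C(X, ℂ) →L[ℂ] ℂ :=
  LinearMap.mkContinuous
    { toFun := fun f => ∫ y, f (T y) ∂μ
      map_add' := fun f g => integral_add
        (integrable_continuousMap_comp μ T f) (integrable_continuousMap_comp μ T g)
      map_smul' := fun c f => integral_smul c fun y => f (T y) }
    (μ.real univ) fun f => by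
      rw [mul_comm]
      exact norm_integral_le_of_norm_le_const (ae_of_all _ fun y => f.norm_coe_le_norm (T y))

lemma integralCompCLM_apply (μ : Measure Y) [IsFiniteMeasure μ] (T : C(Y, X)) (f : C(X, ℂ)) :
    integralCompCLM μ T f = ∫ y, f (T y) ∂μ := rfl

theorem mem_of_forall_integral_add_eq [T2Space X] [AddGroup X] [ContinuousAdd X]
    {K : AddSubgroup X} (hK : IsClosed (K : Set X)) [MeasurableSpace K] [OpensMeasurableSpace K]
    (μ : Measure K) [IsFiniteMeasure μ] [μ.IsOpenPosMeasure] {D : Set C(X, ℂ)}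
    (hD : Dense (Submodule.span ℂ D : Set C(X, ℂ))) {x : X}
    (hx : ∀ f ∈ D, ∫ k, f (x + k) ∂μ = ∫ k, f k ∂μ) : x ∈ K := by
  let J := integralCompCLM μ ⟨fun k : K => x + k, by fun_prop⟩ -
    integralCompCLM μ ⟨((↑) : K → X), continuous_subtype_val⟩
  have hJ : ∀ f, J f = 0 := by
    have hspan : Submodule.span ℂ D ≤ LinearMap.ker (J : C(X, ℂ) →ₗ[ℂ] ℂ) :=
      Submodule.span_le.2 fun f hf => sub_eq_zero.2 (hx f hf)
    exact fun f => closure_minimal hspan (isClosed_singleton.preimage J.continuous) (hD f)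
  by_contra hxK
  obtain ⟨g, hgK, hgx, hg01⟩ := exists_continuous_zero_one_of_isClosed hK isClosed_singleton
    (disjoint_singleton_right.2 hxK)
  have : CompactSpace K := isCompact_iff_compactSpace.mp hK.isCompact
  have hgc : Continuous fun k : K => g (x + k) := by fun_prop
  have hpos : 0 < ∫ k : K, g (x + k) ∂μ :=
    hgc.integral_pos_of_hasCompactSupport_nonneg_nonzero (.of_compactSpace _)
      (fun k => (hg01 _).1) (x := 0) (by simp [hgx rfl])
  refine hpos.ne' ?_
  simpa [J, integralCompCLM_apply, fun k : K => hgK k.2, integral_complex_ofReal] using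
    hJ ((⟨((↑) : ℝ → ℂ), Complex.continuous_ofReal⟩ : C(ℝ, ℂ)).comp g)

end Averaging

lemma integral_toCircle_eq_zero {K : Type*} [AddGroup K] [MeasurableSpace K] [MeasurableAdd K]
    (μ : Measure K) [μ.IsAddLeftInvariant] (χ : K →+ 𝕋) {k₀ : K} (hk₀ : χ k₀ ≠ 0) :
    ∫ k, ((χ k).toCircle : ℂ) ∂μ = 0 := by
  have hinv := integral_add_left_eq_self (μ := μ) (fun k => ((χ k).toCircle : ℂ)) k₀
  simp only [map_add, AddCircle.toCircle_add, Circle.coe_mul, integral_const_mul] at hinv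
  refine (mul_left_eq_self₀.mp hinv).resolve_left fun h => hk₀ ?_
  rwa [Circle.coe_eq_one, ← AddCircle.toCircle_zero (T := 1),
    (AddCircle.injective_toCircle one_ne_zero).eq_iff] at h

theorem mem_closure_of_forall_finsuppPairing_eq_zero {I : Type*} {A : AddSubgroup (I → 𝕋)}
    {x : I → 𝕋} (hx : ∀ n : I →₀ ℤ, (∀ a ∈ A, finsuppPairing n a = 0) → finsuppPairing n x = 0) :
    x ∈ closure (A : Set (I → 𝕋)) := by
  let K := A.topologicalClosure
  let : MeasurableSpace K := borel K
  have : BorelSpace K := ⟨rfl⟩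
  have : CompactSpace K := isCompact_iff_compactSpace.mp A.isClosed_topologicalClosure.isCompact
  rw [← A.topologicalClosure_coe]
  refine mem_of_forall_integral_add_eq A.isClosed_topologicalClosure Measure.addHaar
    dense_span_expChar ?_
  rintro _ ⟨n, rfl⟩
  simp only [expChar_apply_add, integral_const_mul]
  -- a character either vanishes on `closure A`, hence at `x`, or has Haar integral zero there
  by_cases hK : ∀ k : K, finsuppPairing n (k : I → 𝕋) = 0
  · rw [(expChar_apply_eq_one_iff n x).2 (hx n fun a ha => hK ⟨a, A.le_topologicalClosure ha⟩),
      one_mul]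
  · obtain ⟨k₀, hk₀⟩ := not_forall.mp hK
    rw [show ∫ k : K, expChar n k ∂Measure.addHaar = 0 from
      integral_toCircle_eq_zero _ ((finsuppPairing n).comp K.subtype) hk₀, mul_zero]

noncomputable def ratCircleToCircle : AddCircle (1 : ℚ) →+ 𝕋 :=
  QuotientAddGroup.map _ _ (Rat.castHom ℝ : ℚ →+ ℝ)
    (AddSubgroup.zmultiples_le.2 ⟨1, by simp⟩)

lemma ratCircleToCircle_injective : Function.Injective ratCircleToCircle := by
  refine (injective_iff_map_eq_zero _).2 fun q hq => ?_
  induction q using QuotientAddGroup.induction_on with | H r => ?_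
  obtain ⟨n, hn⟩ := (AddCircle.coe_eq_zero_iff 1).1 hq
  have hn' : (n : ℝ) = r := by simpa using hn
  exact (AddCircle.coe_eq_zero_iff 1).2 ⟨n, by rw [zsmul_one]; exact_mod_cast hn'⟩

lemma exists_addMonoidHom_circle_apply_ne_zero {A : Type*} [AddCommGroup A] {a : A}
    (ha : a ≠ 0) : ∃ χ : A →+ 𝕋, χ a ≠ 0 := by
  obtain ⟨c, hc⟩ := CharacterModule.exists_character_apply_ne_zero_of_ne_zero ha
  exact ⟨ratCircleToCircle.comp c, fun h =>
    hc (ratCircleToCircle_injective (h.trans (map_zero _).symm))⟩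

section Duality

variable {G : Type*} [AddCommGroup G]

def annihilator (H : AddSubgroup G) : AddSubgroup (G →+ 𝕋) where
  carrier := {φ | ∀ h ∈ H, φ h = 0}
  zero_mem' _ _ := rfl
  add_mem' ha hb h hh := by simp [ha h hh, hb h hh]
  neg_mem' ha h hh := by simp [ha h hh]

lemma mem_iff_forall_annihilator (H : AddSubgroup G) (x : G) :
    x ∈ H ↔ ∀ φ ∈ annihilator H, φ x = 0 := by
  refine ⟨fun hx φ hφ => hφ x hx, fun h => ?_⟩
  by_contra hx
  obtain ⟨χ, hχ⟩ := exists_addMonoidHom_circle_apply_ne_zero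
    ((QuotientAddGroup.eq_zero_iff x).not.2 hx)
  refine hχ (h (χ.comp (QuotientAddGroup.mk' H)) fun k hk => ?_)
  simp [(QuotientAddGroup.eq_zero_iff k).2 hk]

end Duality

section Topologies

variable {G : Type*} [AddCommGroup G]

lemma tauS_eq_induced (S : AddSubgroup (G →+ 𝕋)) :
    tauS S = TopologicalSpace.induced (fun g (φ : S) => (φ : G →+ 𝕋) g) Pi.topologicalSpace := by
  rw [tauS, induced_to_pi, iInf_subtype']

theorem closure_tauS (H : AddSubgroup G) (S : AddSubgroup (G →+ 𝕋)) :
    @closure G (tauS S) H = {x | ∀ φ ∈ S ⊓ annihilator H, φ x = 0} := by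
  let e := AddMonoidHom.pi fun φ : S => (φ : G →+ 𝕋)
  rw [tauS_eq_induced]
  let _ : TopologicalSpace G := .induced e Pi.topologicalSpace
  refine subset_antisymm (closure_minimal (fun h hh φ hφ => hφ.2 h hh) ?_) fun x hx => ?_
  · have hφ : ∀ φ ∈ S, Continuous φ := fun φ hφ =>
      (continuous_apply (⟨φ, hφ⟩ : S)).comp (continuous_induced_dom (f := e))
    simp only [Set.ofPred_forall]
    exact isClosed_biInter fun φ hφS => isClosed_eq (hφ φ hφS.1) continuous_const
  · refine (closure_induced (f := e)).2 ?_
    rw [← AddSubgroup.coe_map]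
    refine mem_closure_of_forall_finsuppPairing_eq_zero fun n hn => ?_
    have he : ∀ g, finsuppPairing n (e g) = finsuppPairing n S.subtype g := fun g =>
      finsuppPairing_comp n (AddMonoidHom.eval g) S.subtype
    rw [he]
    refine hx _ ⟨?_, fun h hh => he h ▸ hn _ ⟨h, hh, rfl⟩⟩
    rw [← Function.comp_id S.subtype, finsuppPairing_comp]
    exact SetLike.coe_mem _

theorem closure_dualTop (T : AddSubgroup (G →+ 𝕋)) :
    @closure _ (dualTop G) T = {χ | ∀ x : G, (∀ φ ∈ T, φ x = 0) → χ x = 0} := by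
  let _ := dualTop G
  refine subset_antisymm (closure_minimal (fun φ hφ x hx => hx φ hφ) ?_) fun χ hχ => ?_
  · simp only [Set.ofPred_forall]
    exact isClosed_iInter fun x => isClosed_iInter fun _ => isClosed_eq
      ((continuous_apply x).comp continuous_induced_dom) continuous_const
  · refine closure_induced.2 ?_
    show ⇑χ ∈ closure (T.map (AddMonoidHom.coeFn G 𝕋) : Set (G → 𝕋))
    refine mem_closure_of_forall_finsuppPairing_eq_zero fun n hn => ?_
    rw [← Function.comp_id ⇑χ, finsuppPairing_comp]
    refine hχ _ fun φ hφ => ?_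
    rw [← finsuppPairing_comp]
    exact hn _ ⟨φ, hφ, rfl⟩

end Topologies

theorem stmt8 {G : Type*} [AddCommGroup G] (H : AddSubgroup G)
    (S : AddSubgroup (G →+ AddCircle (1 : ℝ))) :
    @IsClosed G (tauS S) (H : Set G) ↔
      {φ : G →+ AddCircle (1 : ℝ) | ∀ h ∈ H, φ h = 0} =
        @closure _ (dualTop G) {φ : G →+ AddCircle (1 : ℝ) | φ ∈ S ∧ ∀ h ∈ H, φ h = 0} := by
  have hA : {φ : G →+ 𝕋 | ∀ h ∈ H, φ h = 0} = annihilator H := rfl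
  have hT : {φ : G →+ 𝕋 | φ ∈ S ∧ ∀ h ∈ H, φ h = 0} = (S ⊓ annihilator H : AddSubgroup _) := rfl
  rw [hA, hT, closure_dualTop, ← @closure_subset_iff_isClosed _ (tauS S), closure_tauS]
  constructor
  · intro hclosed
    ext χ
    exact ⟨fun hχ x hx => hχ x (hclosed hx), fun hχ h hh => hχ h fun φ hφ => hφ.2 h hh⟩
  · intro hann x hx
    exact (mem_iff_forall_annihilator H x).2 fun φ hφ => (Set.ext_iff.1 hann φ).1 hφ x hx
end

section
/- Let G be an Abelian group, H a subgroup of G, and S a subgroup of Ĝ. If A(Ĝ, H) ⊆ S, then H is closed in G_S. Conversely, if H has finite index in G and H is closed in G_S, then A(Ĝ, H) ⊆ S. -/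
/-!
`H` is the intersection of the kernels of the characters vanishing on it, since characters into
the divisible group `𝕋` separate the points of `G ⧸ H`.

Conversely, a closed subgroup of finite index is open, so for `χ` vanishing on `H` the kernel of
`χ` contains a basic neighbourhood `{g | (φᵢ g)ᵢ ∈ U}` with finitely many `φᵢ ∈ S`. Put
`Ψ = (χ, φ₁, …, φₙ) : G → 𝕋¹⁺ⁿ`. Unless some relation `χ + ∑ mᵢ φᵢ = 0` with `mᵢ ∈ ℤ` holds, the
first coordinates of the integer relations satisfied by `Ψ` form a proper subgroup of `ℤ`, which is
killed by some `t ≠ 0` in `𝕋`. Closed subgroups of a torus are cut out by integer relations, so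
`(t, 0, …, 0)` lies in the closure of `Ψ(G)`, giving `g` with `(φᵢ g)ᵢ ∈ U` but `χ g ≠ 0`.
-/

open MeasureTheory UnitAddTorus Filter Topology

lemma AddCircle.coe_toCircle_sum {T : ℝ} {ι : Type*} (s : Finset ι) (f : ι → AddCircle T) :
    (AddCircle.toCircle (∑ i ∈ s, f i) : ℂ) = ∏ i ∈ s, (AddCircle.toCircle (f i) : ℂ) := by
  classical
  induction s using Finset.induction_on with
  | empty => simp
  | insert a s ha ih =>
    rw [Finset.sum_insert ha, Finset.prod_insert ha, AddCircle.toCircle_add, Circle.coe_mul, ih]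

lemma integral_eq_zero_of_add_left_eq_mul {G : Type*} [AddGroup G] [MeasurableSpace G]
    [MeasurableAdd G] {μ : Measure G} [μ.IsAddLeftInvariant] {f : G → ℂ} {c : ℂ} {g₀ : G}
    (hc : c ≠ 1) (hf : ∀ x, f (g₀ + x) = c * f x) : ∫ x, f x ∂μ = 0 := by
  have h := integral_add_left_eq_self (μ := μ) f g₀
  simp_rw [hf, integral_const_mul] at h
  have : (c - 1) * ∫ x, f x ∂μ = 0 := by rw [sub_one_mul, h, sub_self]
  exact (mul_eq_zero.mp this).resolve_left (sub_ne_zero.mpr hc)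

namespace UnitAddTorus

variable {ι : Type*} [Fintype ι]

lemma mFourier_apply_eq_toCircle (n : ι → ℤ) (x : UnitAddTorus ι) :
    mFourier n x = AddCircle.toCircle (∑ i, n i • x i) := by
  simp [mFourier, fourier_apply, AddCircle.coe_toCircle_sum]

lemma mFourier_add_apply (n : ι → ℤ) (x y : UnitAddTorus ι) :
    mFourier n (x + y) = mFourier n x * mFourier n y := by
  simp only [mFourier_apply_eq_toCircle, Pi.add_apply, smul_add, Finset.sum_add_distrib,
    AddCircle.toCircle_add, Circle.coe_mul]

lemma mFourier_apply_eq_one_iff (n : ι → ℤ) (x : UnitAddTorus ι) :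
    mFourier n x = 1 ↔ ∑ i, n i • x i = 0 := by
  rw [mFourier_apply_eq_toCircle, ← Circle.coe_one, Circle.coe_inj, ← AddCircle.toCircle_zero,
    (AddCircle.injective_toCircle one_ne_zero).eq_iff]

theorem measure_ext_of_integral_mFourier_eq {P P' : Measure (UnitAddTorus ι)}
    [IsFiniteMeasure P] [IsFiniteMeasure P']
    (h : ∀ n, ∫ x, mFourier n x ∂P = ∫ x, mFourier n x ∂P') : P = P' := by
  let A := (mFourierSubalgebra ι).comap (BoundedContinuousFunction.toContinuousMapStarₐ ℂ)
  have hA : (A.map (BoundedContinuousFunction.toContinuousMapStarₐ ℂ)).SeparatesPoints := by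
    refine Subalgebra.separatesPoints_monotone (fun f hf => ?_) mFourierSubalgebra_separatesPoints
    exact ⟨BoundedContinuousFunction.mkOfCompact f, hf, rfl⟩
  have hspan : ∀ f ∈ Submodule.span ℂ (Set.range (mFourier (d := ι))),
      ∫ x, f x ∂P = ∫ x, f x ∂P' := by
    have hint (f : C(UnitAddTorus ι, ℂ)) (Q : Measure (UnitAddTorus ι)) [IsFiniteMeasure Q] :
        Integrable f Q :=
      (BoundedContinuousFunction.mkOfCompact f).integrable Q
    intro f hf
    induction hf using Submodule.span_induction with
    | mem f hf => obtain ⟨n, rfl⟩ := hf; exact h n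
    | zero => simp
    | add f₁ f₂ _ _ h₁ h₂ =>
      simp only [ContinuousMap.add_apply]
      rw [integral_add (hint f₁ P) (hint f₂ P), integral_add (hint f₁ P') (hint f₂ P'), h₁, h₂]
    | smul c f _ hf => simp only [ContinuousMap.smul_apply, integral_smul, hf]
  refine ext_of_forall_mem_subalgebra_integral_eq_of_pseudoEMetric_complete_countable hA
    fun g hg => hspan g.toContinuousMap ?_
  rw [← mFourierSubalgebra_coe]
  exact hg

/-- Translating the Haar measure of `M` by `z ∉ M` does not change its Fourier coefficients, hence
does not change the measure; but the translate is carried by `M + z`, which misses `M`. -/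
theorem mem_of_forall_sum_zsmul_eq_zero {M : AddSubgroup (UnitAddTorus ι)}
    (hM : IsClosed (M : Set (UnitAddTorus ι))) {z : UnitAddTorus ι}
    (h : ∀ n : ι → ℤ, (∀ x ∈ M, ∑ i, n i • x i = 0) → ∑ i, n i • z i = 0) : z ∈ M := by
  by_contra hz
  have : CompactSpace M := isCompact_iff_compactSpace.mp hM.isCompact
  have : BorelSpace M := Subtype.borelSpace _
  let μ : Measure M := Measure.addHaarMeasure ⊤
  have hcont : Continuous fun a : M => (a : UnitAddTorus ι) + z :=
    continuous_subtype_val.add continuous_const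
  have hint (n : ι → ℤ) : ∫ x, mFourier n x ∂(μ.map fun a : M => (a : UnitAddTorus ι) + z) =
      ∫ x, mFourier n x ∂(μ.map ((↑) : M → UnitAddTorus ι)) := by
    rw [integral_map hcont.aemeasurable (mFourier n).continuous.aestronglyMeasurable,
      integral_map continuous_subtype_val.aemeasurable
        (mFourier n).continuous.aestronglyMeasurable]
    simp_rw [mFourier_add_apply, integral_mul_const]
    by_cases hn : ∀ x ∈ M, ∑ i, n i • x i = 0
    · rw [(mFourier_apply_eq_one_iff n z).mpr (h n hn), mul_one]
    · push Not at hn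
      obtain ⟨x₀, hx₀M, hx₀⟩ := hn
      rw [integral_eq_zero_of_add_left_eq_mul (g₀ := (⟨x₀, hx₀M⟩ : M))
        (mt (mFourier_apply_eq_one_iff n x₀).mp hx₀) fun a => mFourier_add_apply n x₀ a, zero_mul]
  have hP := measure_ext_of_integral_mFourier_eq hint
  have hM' : MeasurableSet (M : Set (UnitAddTorus ι)) := hM.measurableSet
  have hdisj : (fun a : M => (a : UnitAddTorus ι) + z) ⁻¹' M = ∅ := by
    ext a
    simpa using fun h' => hz (by simpa using M.sub_mem h' a.2)
  have hfull : ((↑) : M → UnitAddTorus ι) ⁻¹' M = Set.univ := by ext; simp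
  apply NeZero.ne μ
  rw [← Measure.measure_univ_eq_zero, ← hfull,
    ← Measure.map_apply continuous_subtype_val.measurable hM', ← hP,
    Measure.map_apply hcont.measurable hM', hdisj, measure_empty]

theorem mem_closure_of_forall_sum_zsmul_eq_zero (M : AddSubgroup (UnitAddTorus ι))
    {z : UnitAddTorus ι} (h : ∀ n : ι → ℤ, (∀ x ∈ M, ∑ i, n i • x i = 0) → ∑ i, n i • z i = 0) :
    z ∈ closure (M : Set (UnitAddTorus ι)) :=
  mem_of_forall_sum_zsmul_eq_zero M.isClosed_topologicalClosure fun n hn =>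
    h n fun x hx => hn x (M.le_topologicalClosure hx)

end UnitAddTorus

noncomputable def AddCircle.ratCastHom : AddCircle (1 : ℚ) →+ UnitAddCircle :=
  QuotientAddGroup.map _ _ (Rat.castHom ℝ).toAddMonoidHom <|
    AddSubgroup.zmultiples_le.mpr ⟨1, by simp⟩

lemma AddCircle.ratCastHom_injective : Function.Injective AddCircle.ratCastHom := by
  refine (injective_iff_map_eq_zero _).mpr fun q hq => ?_
  induction q using QuotientAddGroup.induction_on with
  | H r =>
    obtain ⟨n, hn⟩ := (AddCircle.coe_eq_zero_iff _).mp hq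
    refine (AddCircle.coe_eq_zero_iff _).mpr ⟨n, ?_⟩
    have hn' : ((n : ℚ) : ℝ) = (r : ℝ) := by push_cast; simpa using hn
    simpa using Rat.cast_injective hn'

lemma AddSubgroup.exists_unitAddCircle_hom_eq_zero_of_notMem {G : Type*} [AddCommGroup G]
    {H : AddSubgroup G} {g : G} (hg : g ∉ H) :
    ∃ φ : G →+ UnitAddCircle, (∀ h ∈ H, φ h = 0) ∧ φ g ≠ 0 := by
  obtain ⟨c, hc⟩ := CharacterModule.exists_character_apply_ne_zero_of_ne_zero
    (a := (g : G ⧸ H)) (by rwa [ne_eq, QuotientAddGroup.eq_zero_iff])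
  refine ⟨AddCircle.ratCastHom.comp (c.comp (QuotientAddGroup.mk' H)), fun h hh => ?_, ?_⟩
  · show AddCircle.ratCastHom (c h) = 0
    rw [(QuotientAddGroup.eq_zero_iff h).mpr hh, map_zero, map_zero]
  · show AddCircle.ratCastHom (c g) ≠ 0
    rwa [ne_eq, map_eq_zero_iff _ AddCircle.ratCastHom_injective]

section tauS

variable {G : Type*} [AddCommGroup G] (S : AddSubgroup (G →+ UnitAddCircle))

lemma continuous_tauS {φ : G →+ UnitAddCircle} (hφ : φ ∈ S) : Continuous[tauS S, _] φ :=
  continuous_iff_le_induced.mpr (iInf₂_le φ hφ)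

lemma isTopologicalAddGroup_tauS : @IsTopologicalAddGroup G (tauS S) _ :=
  topologicalAddGroup_iInf fun φ => topologicalAddGroup_iInf fun _ =>
    topologicalAddGroup_induced φ

lemma exists_finite_of_mem_nhds_zero_tauS {V : Set G} (hV : V ∈ @nhds G (tauS S) 0) :
    ∃ I : Set S, I.Finite ∧
      V ∈ comap (AddMonoidHom.pi fun i : I => ((i : S) : G →+ UnitAddCircle)) (𝓝 0) := by
  have hnhds : @nhds G (tauS S) 0 = ⨅ φ : S, comap (φ : G →+ UnitAddCircle) (𝓝 0) := by
    unfold tauS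
    simp only [nhds_iInf, nhds_induced, map_zero, iInf_subtype]
  rw [hnhds, mem_iInf] at hV
  obtain ⟨I, hI, W, hW, rfl⟩ := hV
  have : Finite I := hI
  refine ⟨I, hI, iInter_mem.mpr fun i => ?_⟩
  rw [nhds_pi, Filter.pi, comap_iInf]
  refine mem_iInf_of_mem i ?_
  rw [comap_comap]
  exact hW i

end tauS

theorem UnitAddTorus.exists_single_mem_closure_range {G κ : Type*} [AddCommGroup G] [Fintype κ]
    [DecidableEq κ] (Ψ : G →+ UnitAddTorus κ) (k : κ)
    (h : ∀ m : κ → ℤ, (∀ g, ∑ j, m j • Ψ g j = 0) → m k ≠ 1) :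
    ∃ t ≠ 0, Pi.single k t ∈ closure (Ψ.range : Set (UnitAddTorus κ)) := by
  let A : Submodule ℤ (κ → ℤ) := ⨅ g, LinearMap.ker (Fintype.linearCombination ℤ (Ψ g))
  have hA (m : κ → ℤ) : m ∈ A ↔ ∀ g, ∑ j, m j • Ψ g j = 0 := by
    simp [A, Fintype.linearCombination_apply]
  have h1 : (1 : ℤ) ∉ (A.map (LinearMap.proj k)).toAddSubgroup := by
    rintro ⟨m, hm, hm1⟩
    exact h m ((hA m).mp hm) hm1
  obtain ⟨ψ, hψ, hψ1⟩ := AddSubgroup.exists_unitAddCircle_hom_eq_zero_of_notMem h1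
  refine ⟨ψ 1, hψ1, mem_closure_of_forall_sum_zsmul_eq_zero Ψ.range fun n hn => ?_⟩
  have hnA : n ∈ A := (hA n).mpr fun g => hn _ ⟨g, rfl⟩
  simpa [Pi.single_apply, ← map_zsmul] using
    hψ _ (Submodule.mem_map_of_mem (f := LinearMap.proj k) hnA)

theorem AddMonoidHom.mem_closure_range_of_ker_mem_comap_nhds {G ι : Type*} [AddCommGroup G]
    [Fintype ι] {φ : ι → G →+ UnitAddCircle} {χ : G →+ UnitAddCircle}
    (hχ : (χ.ker : Set G) ∈ comap (AddMonoidHom.pi φ) (𝓝 0)) :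
    χ ∈ AddSubgroup.closure (Set.range φ) := by
  classical
  let Ψ : G →+ UnitAddTorus (Option ι) := AddMonoidHom.pi fun o => o.elim χ φ
  obtain ⟨m, hm, hm1⟩ : ∃ m : Option ι → ℤ, (∀ g, ∑ j, m j • Ψ g j = 0) ∧ m none = 1 := by
    by_contra! h
    obtain ⟨t, ht, hmem⟩ := UnitAddTorus.exists_single_mem_closure_range Ψ none h
    obtain ⟨U, hU, hUker⟩ := mem_comap.mp hχ
    have hW : {x : UnitAddTorus (Option ι) | x none ≠ 0 ∧ (fun i => x (some i)) ∈ U} ∈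
        𝓝 (Pi.single none t) := by
      refine inter_mem ((isOpen_ne_fun (continuous_apply none) continuous_const).mem_nhds ?_) ?_
      · simpa using ht
      · refine (continuous_pi fun i => continuous_apply (some i)).continuousAt.preimage_mem_nhds ?_
        convert hU using 2
        exact funext fun i => Pi.single_eq_of_ne (Option.some_ne_none i) _
    obtain ⟨_, ⟨hne, hUx⟩, g, rfl⟩ := mem_closure_iff_nhds.mp hmem _ hW
    exact hne (hUker hUx)
  have hχ : χ = -∑ i, m (some i) • φ i := by
    ext g
    simpa [Fintype.sum_option, hm1, eq_neg_iff_add_eq_zero, Ψ] using hm g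
  rw [hχ]
  exact neg_mem (sum_mem fun i _ => zsmul_mem (AddSubgroup.subset_closure (Set.mem_range_self i)) _)


section Annihilator

variable {G : Type*} [AddCommGroup G] {H : AddSubgroup G} {S : AddSubgroup (G →+ UnitAddCircle)}

theorem isClosed_tauS_of_annihilator_subset
    (hS : {φ : G →+ UnitAddCircle | ∀ h ∈ H, φ h = 0} ⊆ S) : IsClosed[tauS S] (H : Set G) := by
  let _ : TopologicalSpace G := tauS S
  have hH : (H : Set G) = ⋂ φ ∈ {φ : G →+ UnitAddCircle | ∀ h ∈ H, φ h = 0}, φ ⁻¹' {0} := by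
    ext g
    simp only [SetLike.mem_coe, Set.mem_iInter₂, Set.mem_preimage, Set.mem_singleton_iff]
    refine ⟨fun hg φ hφ => hφ g hg, fun hg => ?_⟩
    by_contra hgH
    obtain ⟨φ, hφH, hφg⟩ := AddSubgroup.exists_unitAddCircle_hom_eq_zero_of_notMem hgH
    exact hφg (hg φ hφH)
  rw [hH]
  exact isClosed_biInter fun φ hφ => isClosed_singleton.preimage (continuous_tauS S (hS hφ))

theorem annihilator_subset_of_isClosed_tauS [H.FiniteIndex] (hH : IsClosed[tauS S] (H : Set G)) :
    {φ : G →+ UnitAddCircle | ∀ h ∈ H, φ h = 0} ⊆ S := by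
  let _ : TopologicalSpace G := tauS S
  have := isTopologicalAddGroup_tauS S
  intro χ hχ
  have hker : (χ.ker : Set G) ∈ 𝓝 0 :=
    mem_of_superset ((H.isOpen_of_isClosed_of_finiteIndex hH).mem_nhds H.zero_mem) hχ
  obtain ⟨I, hI, hIker⟩ := exists_finite_of_mem_nhds_zero_tauS S hker
  have := hI.fintype
  refine (AddSubgroup.closure_le S).mpr ?_
    (AddMonoidHom.mem_closure_range_of_ker_mem_comap_nhds hIker)
  rintro _ ⟨i, rfl⟩
  exact i.1.2

end Annihilator

theorem stmt9 {G : Type*} [AddCommGroup G] (H : AddSubgroup G)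
    (S : AddSubgroup (G →+ AddCircle (1 : ℝ))) :
    ({φ : G →+ AddCircle (1 : ℝ) | ∀ h ∈ H, φ h = 0} ⊆ (S : Set (G →+ AddCircle (1 : ℝ))) →
        @IsClosed G (tauS S) (H : Set G)) ∧
      (H.index ≠ 0 → @IsClosed G (tauS S) (H : Set G) →
        {φ : G →+ AddCircle (1 : ℝ) | ∀ h ∈ H, φ h = 0} ⊆ (S : Set (G →+ AddCircle (1 : ℝ)))) :=
  ⟨isClosed_tauS_of_annihilator_subset, fun hH hclosed =>
    have : H.FiniteIndex := ⟨hH⟩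
    annihilator_subset_of_isClosed_tauS hclosed⟩
end

section
/- Let (G, τ) be an infinite Abelian topological group whose topology is totally bounded and which is topologically simple. Then G is torsion-free and G is algebraically isomorphic to a subgroup of the real numbers, i.e., there exists an injective group homomorphism from G into (ℝ, +). -/
open Cardinal Set Topology

def IsTopologicallySimple (G : Type*) [AddGroup G] [TopologicalSpace G] : Prop :=
  ∀ H : AddSubgroup G, IsClosed (H : Set G) → H = ⊥ ∨ H = ⊤

theorem IsTopologicallySimple.isAddTorsionFree {G : Type*} [AddCommGroup G] [TopologicalSpace G]
    [T1Space G] [Infinite G] (hG : IsTopologicallySimple G) : IsAddTorsionFree G := by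
  refine .of_not_isOfFinAddOrder fun g hg hfin => ?_
  have hfinite := finite_zmultiples.2 hfin
  rcases hG _ hfinite.isClosed with hbot | htop
  · exact hg (AddSubgroup.zmultiples_eq_bot.1 hbot)
  · exact Set.infinite_univ (α := G) (by simpa [htop] using hfinite)

section TopologicalAddGroup

variable {G : Type*} [AddGroup G] [TopologicalSpace G] [IsTopologicalAddGroup G]

theorem exists_seq_nhds_zero_sub_mem {U : Set G} (hU : U ∈ 𝓝 0) :
    ∃ V : ℕ → Set G, V 0 = U ∧ (∀ n, V n ∈ 𝓝 0) ∧
      ∀ n, ∀ a ∈ V (n + 1), ∀ b ∈ V (n + 1), a - b ∈ V n := by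
  choose W hW hWsub using fun s : {s : Set G // s ∈ 𝓝 0} => exists_nhds_half_neg s.2
  let V : ℕ → {s : Set G // s ∈ 𝓝 0} := fun n => Nat.rec ⟨U, hU⟩ (fun _ s => ⟨W s, hW s⟩) n
  exact ⟨fun n => (V n).1, rfl, fun n => (V n).2, fun n => hWsub (V n)⟩

theorem IsTopologicallySimple.eq_zero_of_forall_mem (hG : IsTopologicallySimple G)
    {V : ℕ → Set G} (hclosed : IsClosed (V 0)) (hne : V 0 ≠ Set.univ) (hzero : ∀ n, (0 : G) ∈ V n)
    (hsub : ∀ n, ∀ a ∈ V (n + 1), ∀ b ∈ V (n + 1), a - b ∈ V n)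
    {x : G} (hx : ∀ n, x ∈ V n) : x = 0 := by
  let H : AddSubgroup G := .ofSub (⋂ n, V n) ⟨0, mem_iInter.2 hzero⟩ fun a ha b hb =>
    mem_iInter.2 fun n => by
      simpa [sub_eq_add_neg] using hsub n a (mem_iInter.1 ha _) b (mem_iInter.1 hb _)
  have hH : H.topologicalClosure ≠ ⊤ := by
    intro htop
    obtain ⟨y, hy⟩ := (ne_univ_iff_exists_notMem _).1 hne
    have hsubset : (H.topologicalClosure : Set G) ⊆ V 0 :=
      closure_minimal (iInter_subset _ 0) hclosed
    exact hy (hsubset (htop ▸ AddSubgroup.mem_top y))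
  have hbot := (hG _ H.isClosed_topologicalClosure).resolve_right hH
  have hxH : x ∈ H := mem_iInter.2 hx
  simpa [hbot] using H.le_topologicalClosure hxH

end TopologicalAddGroup

theorem mk_le_continuum_of_finite_covers {G : Type*} [AddCommGroup G] (V : ℕ → Set G)
    (hcover : ∀ n, ∃ F : Set G, F.Finite ∧ ∀ g : G, ∃ f ∈ F, ∃ u ∈ V n, g = f + u)
    (hsub : ∀ n, ∀ a ∈ V (n + 1), ∀ b ∈ V (n + 1), a - b ∈ V n)
    (hsep : ∀ x : G, (∀ n, x ∈ V n) → x = 0) : #G ≤ 𝔠 := by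
  choose F hFfin c hcF u hu hcu using hcover
  let code : G → ℕ → ⋃ n, F n := fun g n => ⟨c (n + 1) g, mem_iUnion_of_mem _ (hcF _ g)⟩
  have hcode : Function.Injective code := by
    intro x y hxy
    refine sub_eq_zero.1 (hsep _ fun n => ?_)
    have hc : c (n + 1) x = c (n + 1) y := congrArg Subtype.val (congrFun hxy n)
    have hdiff : x - y = u (n + 1) x - u (n + 1) y :=
      calc x - y = (c (n + 1) x + u (n + 1) x) - (c (n + 1) y + u (n + 1) y) := by
            rw [← hcu, ← hcu]
        _ = u (n + 1) x - u (n + 1) y := by rw [hc]; abel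
    exact hdiff ▸ hsub n _ (hu _ x) _ (hu _ y)
  have : Countable (⋃ n, F n) :=
    (countable_iUnion fun n => (hFfin n).countable).to_subtype
  calc #G ≤ #(ℕ → ⋃ n, F n) := mk_le_of_injective hcode
    _ = #(⋃ n, F n) ^ ℵ₀ := by rw [mk_arrow]; simp
    _ ≤ ℵ₀ ^ ℵ₀ := power_le_power_right mk_le_aleph0
    _ = 𝔠 := aleph0_power_aleph0

theorem IsTopologicallySimple.mk_le_continuum {G : Type*} [AddCommGroup G] [TopologicalSpace G]
    [IsTopologicalAddGroup G] [T1Space G] [Nontrivial G] (hG : IsTopologicallySimple G)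
    (hcover : ∀ U ∈ 𝓝 (0 : G), ∃ F : Set G, F.Finite ∧ ∀ g : G, ∃ f ∈ F, ∃ u ∈ U, g = f + u) :
    #G ≤ 𝔠 := by
  obtain ⟨x₀, hx₀⟩ := exists_ne (0 : G)
  obtain ⟨U, hU, hUclosed, hUx₀⟩ :=
    exists_mem_nhds_isClosed_subset (isOpen_compl_singleton.mem_nhds hx₀.symm)
  obtain ⟨V, hV0, hV, hsub⟩ := exists_seq_nhds_zero_sub_mem hU
  have hne : V 0 ≠ Set.univ := fun h => hUx₀ (hV0 ▸ h ▸ mem_univ x₀) rfl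
  exact mk_le_continuum_of_finite_covers V (fun n => hcover _ (hV n)) hsub fun x hx =>
    hG.eq_zero_of_forall_mem (hV0 ▸ hUclosed) hne (fun n => mem_of_mem_nhds (hV n)) hsub hx

theorem DivisibleHull.span_range_coe (G : Type*) [AddCommGroup G] [IsAddTorsionFree G] :
    Submodule.span ℚ (range ((↑) : G → DivisibleHull G)) = ⊤ := by
  refine Submodule.eq_top_iff'.2 fun x => ?_
  induction x using DivisibleHull.ind with | mk m s => ?_
  have hs : ((s : ℕ) : ℚ) • DivisibleHull.mk m s = m := by
    rw [Nat.cast_smul_eq_nsmul, DivisibleHull.nsmul_mk, DivisibleHull.mk_eq_mk_iff_smul_eq_smul]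
    simp
  rw [← inv_smul_smul₀ (by positivity : ((s : ℕ) : ℚ) ≠ 0) (DivisibleHull.mk m s), hs]
  exact Submodule.smul_mem _ _ (Submodule.subset_span (mem_range_self m))

theorem exists_injective_addMonoidHom_real {G : Type*} [AddCommGroup G] [IsAddTorsionFree G]
    (hG : #G ≤ 𝔠) : ∃ f : G →+ ℝ, Function.Injective f := by
  have hrank : Module.rank ℚ (DivisibleHull G) ≤ 𝔠 :=
    calc Module.rank ℚ (DivisibleHull G) ≤ #(range ((↑) : G → DivisibleHull G)) := by
          rw [← rank_top, ← DivisibleHull.span_range_coe G]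
          exact rank_span_le _
      _ ≤ #G := mk_range_le
      _ ≤ 𝔠 := hG
  obtain ⟨f, hf⟩ := (lift_rank_le_iff_exists_linearMap (R := ℚ) (M := DivisibleHull G) (M' := ℝ)).1
    (by simpa [Real.rank_rat_real] using hrank)
  exact ⟨f.toAddMonoidHom.comp (DivisibleHull.coeAddMonoidHom G),
    hf.comp DivisibleHull.coe_injective⟩

theorem stmt17 {G : Type*} [AddCommGroup G] [Infinite G] (t : TopologicalSpace G)
    (ht : IsTotallyBoundedGroupTopology t)
    (hsimple : ∀ H : AddSubgroup G, @IsClosed G t (H : Set G) → H = ⊥ ∨ H = ⊤) :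
    (∀ g : G, ∀ n : ℕ, 0 < n → n • g = 0 → g = 0) ∧
      ∃ f : G →+ ℝ, Function.Injective f := by
  let _ : TopologicalSpace G := t
  obtain ⟨_, _, hcover⟩ := ht
  have hG : IsTopologicallySimple G := hsimple
  have := hG.isAddTorsionFree
  exact ⟨fun g n hn => (nsmul_eq_zero_iff_right hn.ne').1,
    exists_injective_addMonoidHom_real (hG.mk_le_continuum hcover)⟩
end

section
/- Let p be a prime and let K := ∏_{n ∈ ℕ, n ≥ 1} ℤ/p^nℤ, the product of the cyclic groups of order p^n, equipped with the product topology where each factor ℤ/p^nℤ is discrete. Then K contains at least 2^𝔠-many totally dense subgroups, where 𝔠 = 2^{ℵ₀}; that is, the set of subgroups H of K such that H ∩ L is dense in L for every closed subgroup L of K has cardinality at least 2^𝔠. -/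
/-- The product topology on `∏_{n ≥ 1} ℤ/p^nℤ` where each factor is discrete. -/
noncomputable def Ktop (p : ℕ) : TopologicalSpace (∀ n : ℕ, ZMod (p ^ (n + 1))) :=
  @Pi.topologicalSpace ℕ (fun n => ZMod (p ^ (n + 1))) (fun _ => ⊥)

/-!
`K = ZModPowPi p` is a module over the `p`-adic integers, `a` acting on the `n`-th factor through
reduction modulo `p^(n+1)`. For non-torsion `x` and any `m`, the elements `(1 + p^(m+1) a) • x`
with `a ∈ ℤ_[p]` lie in the closure of `ℤ x`, agree with `x` in the coordinates `≤ m`, and are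
pairwise distinct modulo torsion, so there are `𝔠` of them. There are only `𝔠` pairs `(x, m)`, so
a transfinite recursion of length `𝔠` can choose one such element `w x m` for every pair, and `𝔠`
further elements `y r`, each outside the saturation of the `ℤ`-span of the earlier choices (a set
of size `< 𝔠`); the whole family is then `ℤ`-independent modulo torsion. A subgroup containing the
torsion and all the `w x m` meets every closed subgroup `L` densely, since each non-torsion
`x ∈ L` is the limit of the `w x m ∈ L`. Adding the `y r` for `r` in a set `S` gives `2^𝔠` such
subgroups, pairwise distinct because independence lets one read `S` off the subgroup.
-/

section LinearIndependence

open Cardinal Set Submodule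

universe u

variable {M : Type u} [AddCommGroup M]

theorem Cardinal.mk_span_int_le (A : Set M) : #(span ℤ A) ≤ max #A ℵ₀ := by
  rcases isEmpty_or_nonempty A with hA | hA
  · simp [Set.isEmpty_coe_sort.mp hA]
  · rw [Finsupp.span_eq_range_linearCombination]
    refine (mk_le_of_surjective (LinearMap.surjective_rangeRestrict _)).trans ?_
    simp

theorem Cardinal.mk_setOf_zsmul_mem_lt [IsAddTorsionFree M] {κ : Cardinal.{u}} (hκ : ℵ₀ < κ)
    {S : Set M} (hS : #S < κ) : #{y : M | ∃ c : ℤ, c ≠ 0 ∧ c • y ∈ S} < κ := by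
  choose c hc0 hcS using fun y : {y : M | ∃ c : ℤ, c ≠ 0 ∧ c • y ∈ S} => y.2
  have hinj : Function.Injective fun y => (c y, (⟨c y • y.1, hcS y⟩ : S)) := by
    intro y y' h
    simp only [Prod.mk.injEq, Subtype.mk.injEq] at h
    rw [h.1] at h
    exact Subtype.ext (zsmul_right_injective (hc0 y') h.2)
  refine (mk_le_of_injective hinj).trans_lt ?_
  simpa using mul_lt_of_lt hκ.le hκ hS

theorem linearIndependent_of_forall_smul_mem_span_Iio {R ι : Type*} [Ring R] [Module R M]
    [LinearOrder ι] {v : ι → M} (h : ∀ i (c : R), c • v i ∈ span R (v '' Iio i) → c = 0) :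
    LinearIndependent R v := by
  classical
  rw [linearIndependent_iff']
  intro s
  induction s using Finset.induction_on_max with
  | empty => simp
  | insert a s hlt ih =>
    intro g hg i hi
    rw [Finset.sum_insert fun has => (hlt a has).false] at hg
    have hga : g a = 0 := h a (g a) <| by
      rw [eq_neg_of_add_eq_zero_left hg]
      exact neg_mem (sum_mem fun j hj => smul_mem _ _ (subset_span ⟨j, hlt j hj, rfl⟩))
    rw [hga, zero_smul, zero_add] at hg
    rcases Finset.mem_insert.mp hi with rfl | hi
    · exact hga
    · exact ih g hg i hi

theorem exists_linearIndependent_forall_mem_of_mk_Iio_lt [IsAddTorsionFree M] {ι : Type u}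
    [LinearOrder ι] [WellFoundedLT ι] {κ : Cardinal.{u}} (hκ : ℵ₀ < κ)
    (hι : ∀ i : ι, #(Iio i) < κ) (C : ι → Set M) (hC : ∀ i, κ ≤ #(C i)) :
    ∃ v : ι → M, (∀ i, v i ∈ C i) ∧ LinearIndependent ℤ v := by
  have hpick : ∀ i (A : Set M), ∃ y ∈ C i, #A < κ → ∀ c : ℤ, c • y ∈ span ℤ A → c = 0 := by
    intro i A
    by_cases hA : #A < κ
    · have hbad := mk_setOf_zsmul_mem_lt hκ ((mk_span_int_le A).trans_lt (max_lt hA hκ))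
      obtain ⟨y, hyC, hy⟩ := not_subset.mp fun hsub =>
        ((mk_le_mk_of_subset hsub).trans_lt hbad).not_ge (hC i)
      exact ⟨y, hyC, fun _ c hc => by_contra fun h => hy ⟨c, h, hc⟩⟩
    · obtain ⟨y, hy⟩ := mk_ne_zero_iff.mp (aleph0_pos.trans (hκ.trans_le (hC i))).ne'
      exact ⟨y, hy, fun h => absurd h hA⟩
  choose pick hpickC hpick using hpick
  let v : ι → M := wellFounded_lt.fix fun i rec => pick i (range fun j : Iio i => rec j j.2)
  have hv : ∀ i, v i = pick i (v '' Iio i) := fun i => by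
    rw [image_eq_range]
    exact wellFounded_lt.fix_eq _ i
  refine ⟨v, fun i => hv i ▸ hpickC _ _, linearIndependent_of_forall_smul_mem_span_Iio ?_⟩
  intro i c hc
  rw [hv i] at hc
  exact hpick i _ (mk_image_le.trans_lt (hι i)) c hc

theorem exists_linearIndependent_forall_mem [IsAddTorsionFree M] {ι : Type u}
    {κ : Cardinal.{u}} (hκ : ℵ₀ < κ) (hι : #ι ≤ κ) (C : ι → Set M) (hC : ∀ i, κ ≤ #(C i)) :
    ∃ v : ι → M, (∀ i, v i ∈ C i) ∧ LinearIndependent ℤ v := by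
  obtain ⟨f⟩ : Nonempty (ι ↪ κ.ord.ToType) := by rwa [← le_def, mk_ord_toType]
  let := LinearOrder.lift' f f.injective
  have : WellFoundedLT ι := StrictMono.wellFoundedLT (f := f) fun _ _ h => h
  refine exists_linearIndependent_forall_mem_of_mk_Iio_lt hκ (fun i => ?_) C hC
  calc #(Iio i) ≤ #(Iio (f i)) := mk_le_of_injective (f := fun j : Iio i => ⟨f j, j.2⟩)
          fun j j' h => Subtype.ext (f.injective (congrArg Subtype.val h))
    _ < κ := by simpa using mk_Iio_lt (f i)

end LinearIndependence

section Torsion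

open Submodule

theorem Submodule.injective_mkQ_smul_of_notMem_torsion {R M : Type*} [CommRing R] [IsDomain R]
    [AddCommGroup M] [Module R M] {x : M} (hx : x ∉ torsion R M) :
    Function.Injective fun a : R => (torsion R M).mkQ (a • x) := by
  intro a b hab
  by_contra hne
  obtain ⟨c, hc⟩ := (mem_torsion_iff _).mp <| (Submodule.Quotient.eq _).mp hab
  rw [Submonoid.smul_def, ← sub_smul, smul_smul] at hc
  exact hx ((mem_torsion_iff x).mpr ⟨⟨_, mem_nonZeroDivisors_of_ne_zero
    (mul_ne_zero (nonZeroDivisors.coe_ne_zero c) (sub_ne_zero.mpr hne))⟩, hc⟩)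

instance Submodule.QuotientTorsion.isAddTorsionFree {R M : Type*} [CommRing R] [IsDomain R]
    [CharZero R] [AddCommGroup M] [Module R M] : IsAddTorsionFree (M ⧸ torsion R M) :=
  .of_isTorsionFree R _

end Torsion

section Topology

open Set

theorem subset_closure_inter_of_forall_mem_closure_zmultiples {G : Type*} [TopologicalSpace G]
    [AddGroup G] {H L : AddSubgroup G}
    (hH : ∀ x, x ∈ closure ((H : Set G) ∩ closure (AddSubgroup.zmultiples x)))
    (hL : IsClosed (L : Set G)) : (L : Set G) ⊆ closure (H ∩ L) := fun x hx =>
  closure_mono (inter_subset_inter_right _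
    (closure_minimal (SetLike.coe_subset_coe.mpr (AddSubgroup.zmultiples_le.mpr hx)) hL)) (hH x)

theorem mem_closure_of_forall_exists_forall_le_eq {X : ℕ → Type*} [∀ n, TopologicalSpace (X n)]
    {A : Set (∀ n, X n)} {x : ∀ n, X n} (h : ∀ m, ∃ a ∈ A, ∀ n ≤ m, a n = x n) :
    x ∈ closure A := by
  rw [mem_closure_iff]
  intro o ho hxo
  obtain ⟨I, u, hu, hIu⟩ := isOpen_pi_iff.mp ho x hxo
  obtain ⟨a, haA, hax⟩ := h (I.sup id)
  exact ⟨a, hIu fun i hi => (hax i (Finset.le_sup (f := id) hi)).symm ▸ (hu i hi).2, haA⟩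

end Topology

namespace PadicInt

open Cardinal

variable {p : ℕ} [Fact p.Prime]

noncomputable instance moduleZModPow (n : ℕ) : Module ℤ_[p] (ZMod (p ^ n)) :=
  (toZModPow n).toModule

theorem continuum_le_mk : 𝔠 ≤ #ℤ_[p] :=
  (continuum_le_cardinal_of_isOpen ℚ_[p] (E := ℚ_[p])
    (IsUltrametricDist.isOpen_closedBall (0 : ℚ_[p]) one_ne_zero) ⟨0, by simp⟩).trans_eq
    (mk_congr (Equiv.subtypeEquivRight fun _ => mem_closedBall_zero_iff :
      Metric.closedBall (0 : ℚ_[p]) 1 ≃ ℤ_[p]))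

end PadicInt

abbrev ZModPowPi (p : ℕ) : Type := ∀ n : ℕ, ZMod (p ^ (n + 1))

namespace ZModPowPi

open Cardinal Set Submodule PadicInt

variable (p : ℕ) [Fact p.Prime]

local notation "Q" => ZModPowPi p ⧸ torsion ℤ_[p] (ZModPowPi p)

variable {p} in
theorem smul_mem_closure_zmultiples (a : ℤ_[p]) (x : ZModPowPi p) :
    a • x ∈ closure (AddSubgroup.zmultiples x : Set (ZModPowPi p)) := by
  refine mem_closure_of_forall_exists_forall_le_eq fun m => ⟨a.appr (m + 1) • x,
    (AddSubgroup.zmultiples x).nsmul_mem (AddSubgroup.mem_zmultiples x) _, fun n hn => ?_⟩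
  have hnm : n + 1 ≤ m + 1 := by omega
  change _ = toZModPow (n + 1) a * x n
  rw [Pi.smul_apply, nsmul_eq_mul, ← cast_toZModPow _ _ hnm,
    show toZModPow (m + 1) a = (a.appr (m + 1) : ZMod (p ^ (m + 1))) from rfl,
    ZMod.cast_natCast (pow_dvd_pow p hnm)]

variable {p} in
theorem one_add_pow_mul_smul_apply_of_le (a : ℤ_[p]) (x : ZModPowPi p) {m n : ℕ} (hn : n ≤ m) :
    ((1 + (p : ℤ_[p]) ^ (m + 1) * a) • x) n = x n := by
  change toZModPow (n + 1) _ * x n = x n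
  have : (p : ZMod (p ^ (n + 1))) ^ (m + 1) = 0 := by
    rw [← Nat.cast_pow, ZMod.natCast_eq_zero_iff]
    exact pow_dvd_pow p (by omega)
  simp [this]

theorem one_notMem_torsion : (1 : ZModPowPi p) ∉ torsion ℤ_[p] (ZModPowPi p) := by
  intro h
  obtain ⟨c, hc⟩ := (mem_torsion_iff _).mp h
  refine nonZeroDivisors.coe_ne_zero c (ext_of_toZModPow.mp fun n => ?_)
  cases n with
  | zero => exact (ZMod.subsingleton_iff.mpr (pow_zero p)).elim _ _
  | succ n =>
    rw [map_zero]
    exact (mul_one _).symm.trans (congrFun hc n)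

theorem mk_le_continuum : #(ZModPowPi p) ≤ 𝔠 := by
  have : NeZero p := ⟨(Fact.out : p.Prime).ne_zero⟩
  rw [mk_pi]
  calc prod (fun n => #(ZMod (p ^ (n + 1)))) ≤ prod fun _ : ℕ => ℵ₀ :=
        prod_le_prod _ _ fun _ => (lt_aleph0_of_finite _).le
    _ = 𝔠 := by simp

noncomputable def approxCandidates (x : ZModPowPi p) (m : ℕ) : Set Q :=
  range fun a : ℤ_[p] => (torsion ℤ_[p] (ZModPowPi p)).mkQ ((1 + (p : ℤ_[p]) ^ (m + 1) * a) • x)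

theorem continuum_le_mk_approxCandidates {x : ZModPowPi p} (hx : x ∉ torsion ℤ_[p] (ZModPowPi p))
    (m : ℕ) : 𝔠 ≤ #(approxCandidates p x m) := by
  have hp : (p : ℤ_[p]) ≠ 0 := Nat.cast_ne_zero.mpr (Fact.out : p.Prime).ne_zero
  refine continuum_le_mk.trans_eq (mk_range_eq _ ?_).symm
  exact (injective_mkQ_smul_of_notMem_torsion hx).comp
    ((add_right_injective 1).comp (mul_right_injective₀ (pow_ne_zero (m + 1) hp)))

theorem continuum_le_mk_quotient_torsion : 𝔠 ≤ #Q :=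
  continuum_le_mk.trans
    (mk_le_of_injective (injective_mkQ_smul_of_notMem_torsion (one_notMem_torsion p)))

abbrev NonTorsion : Type := {x : ZModPowPi p // x ∉ torsion ℤ_[p] (ZModPowPi p)}

theorem mk_nonTorsion_prod_nat_sum_real_le : #(NonTorsion p × ℕ ⊕ ℝ) ≤ 𝔠 := by
  simp only [mk_sum, mk_prod, mk_nat, mk_real, lift_uzero]
  exact add_le_of_le aleph0_le_continuum (mul_le_of_le aleph0_le_continuum
    ((mk_subtype_le _).trans (mk_le_continuum p)) aleph0_le_continuum) le_rfl

variable {p} {β : Type*}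

noncomputable def spanPreimage (v : NonTorsion p × ℕ ⊕ β → Q) (S : Set β) : AddSubgroup (ZModPowPi p) :=
  (span ℤ (v '' (range Sum.inl ∪ Sum.inr '' S))).toAddSubgroup.comap
    (torsion ℤ_[p] (ZModPowPi p)).mkQ.toAddMonoidHom

theorem subset_closure_spanPreimage_inter {v : NonTorsion p × ℕ ⊕ β → Q}
    (hv : ∀ j, v (.inl j) ∈ approxCandidates p j.1 j.2) (S : Set β)
    {L : AddSubgroup (ZModPowPi p)} (hL : IsClosed (L : Set (ZModPowPi p))) :
    (L : Set (ZModPowPi p)) ⊆ closure (spanPreimage v S ∩ L) := by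
  refine subset_closure_inter_of_forall_mem_closure_zmultiples (fun x => ?_) hL
  by_cases hx : x ∈ torsion ℤ_[p] (ZModPowPi p)
  · refine subset_closure ⟨?_, subset_closure (AddSubgroup.mem_zmultiples x)⟩
    simp [spanPreimage, (Quotient.mk_eq_zero _).mpr hx]
  · refine mem_closure_of_forall_exists_forall_le_eq fun m => ?_
    obtain ⟨a, ha⟩ := hv (⟨x, hx⟩, m)
    refine ⟨_, ⟨?_, smul_mem_closure_zmultiples _ x⟩,
      fun n hn => one_add_pow_mul_smul_apply_of_le a x hn⟩
    beta_reduce at ha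
    change (torsion ℤ_[p] (ZModPowPi p)).mkQ _ ∈ span ℤ _
    rw [ha]
    exact subset_span (mem_image_of_mem v (Or.inl (mem_range_self _)))

theorem spanPreimage_injective {v : NonTorsion p × ℕ ⊕ β → Q} (hv : LinearIndependent ℤ v) :
    Function.Injective (spanPreimage v) := by
  have key : ∀ S r, r ∈ S ↔ v (.inr r) ∈ span ℤ (v '' (range Sum.inl ∪ Sum.inr '' S)) :=
    fun S r => ⟨fun hr => subset_span (mem_image_of_mem v (Or.inr (mem_image_of_mem _ hr))),
      fun h => by_contra fun hr => hv.notMem_span_image (by simpa using hr) h⟩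
  intro S S' h
  have hspan := toAddSubgroup_injective (AddSubgroup.comap_injective (mkQ_surjective _) h)
  ext r
  rw [key, key, hspan]

end ZModPowPi

theorem stmt18 (p : ℕ) (hp : p.Prime) :
    (2 : Cardinal) ^ Cardinal.continuum ≤
      Cardinal.mk {H : AddSubgroup (∀ n : ℕ, ZMod (p ^ (n + 1))) //
        ∀ L : AddSubgroup (∀ n : ℕ, ZMod (p ^ (n + 1))),
          @IsClosed _ (Ktop p) (L : Set (∀ n : ℕ, ZMod (p ^ (n + 1)))) →
          (L : Set (∀ n : ℕ, ZMod (p ^ (n + 1)))) ⊆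
            @closure _ (Ktop p)
              ((H : Set (∀ n : ℕ, ZMod (p ^ (n + 1)))) ∩ L)} := by
  have : Fact p.Prime := ⟨hp⟩
  obtain ⟨v, hvC, hv⟩ := exists_linearIndependent_forall_mem Cardinal.aleph0_lt_continuum
    (ZModPowPi.mk_nonTorsion_prod_nat_sum_real_le p)
    (Sum.elim (fun j => ZModPowPi.approxCandidates p j.1 j.2) fun _ => Set.univ)
    (Sum.rec (fun j => ZModPowPi.continuum_le_mk_approxCandidates p j.1.2 j.2)
      fun _ => (ZModPowPi.continuum_le_mk_quotient_torsion p).trans_eq Cardinal.mk_univ.symm)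
  calc (2 : Cardinal) ^ Cardinal.continuum = Cardinal.mk (Set ℝ) := by
        rw [Cardinal.mk_set, Cardinal.mk_real]
    _ ≤ _ := Cardinal.mk_le_of_injective (f := fun S => ⟨ZModPowPi.spanPreimage v S,
        fun _ hL => ZModPowPi.subset_closure_spanPreimage_inter (fun j => hvC (.inl j)) S hL⟩)
      fun _ _ h => ZModPowPi.spanPreimage_injective hv (congrArg Subtype.val h)
end
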